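/- arXiv:2507.04172 — 6 statements merged into one kernel-verified Lean document; each statement's English description precedes it below -/
import Mathlib

section
/- Consider two agents a and b on the integer line whose position sequences are eventually periodic: each position sequence has a prefix of length at most 3H followed by a (double) period of length at most 6H during which the agent shifts by a fixed amount. Suppose b follows a (both progress in the same direction, with b behind) and their starting positions are at distance D > 72H² + 6H. If the speed of b is at most the speed of a, then the positions of a and b never coincide in any round. -/
/-- if agent `b` follows agent `a` (both left-progressing, `b`
starting to the right of `a`) at initial distance `D > 72H² + 6H`, and the
speed of `b` does not exceed the speed of `a`, then they never meet. -/
theorem stmt_2 (H : ℕ) (pa pb : ℕ → ℤ)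
    (hstepa : ∀ n, |pa (n + 1) - pa n| ≤ 1)
    (hstepb : ∀ n, |pb (n + 1) - pb n| ≤ 1)
    (πa τa πb τb : ℕ) (ca cb : ℤ)
    (hπa : πa ≤ 3 * H) (hτa1 : 1 ≤ τa) (hτa : τa ≤ 6 * H)
    (hπb : πb ≤ 3 * H) (hτb1 : 1 ≤ τb) (hτb : τb ≤ 6 * H)
    (hpera : ∀ t, πa ≤ t → pa (t + τa) = pa t + ca)
    (hperb : ∀ t, πb ≤ t → pb (t + τb) = pb t + cb)
    (hca : ca < 0) (hcb : cb < 0)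
    (D : ℤ) (hD : pb 0 - pa 0 = D)
    (hDbig : (72 * H ^ 2 + 6 * H : ℤ) < D)
    (hspeed : (|cb| : ℚ) / (τb : ℚ) ≤ (|ca| : ℚ) / (τa : ℚ)) :
    ∀ n, pa n ≠ pb n := by
  set g : ℕ → ℤ := fun n => pb n - pa n with hg
  -- Lipschitz bound on the gap
  have hlip : ∀ m d : ℕ, g m - 2 * (d : ℤ) ≤ g (m + d) := by
    intro m d
    induction d with
    | zero => simp
    | succ d ih =>
      have ha := abs_le.mp (hstepa (m + d))
      have hb := abs_le.mp (hstepb (m + d))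
      have : m + (d + 1) = (m + d) + 1 := by ring
      rw [this]
      simp only [hg] at *
      push_cast
      push_cast at ih
      linarith [ha.1, ha.2, hb.1, hb.2]
  -- iterated periodicity
  have hka : ∀ t, πa ≤ t → ∀ k : ℕ, pa (t + k * τa) = pa t + (k : ℤ) * ca := by
    intro t ht k
    induction k with
    | zero => simp
    | succ k ih =>
      have e : t + (k + 1) * τa = (t + k * τa) + τa := by ring
      have h2 : pa ((t + k * τa) + τa) = pa (t + k * τa) + ca :=
        hpera _ (by omega)
      rw [e, h2, ih]; push_cast; ring
  have hkb : ∀ t, πb ≤ t → ∀ k : ℕ, pb (t + k * τb) = pb t + (k : ℤ) * cb := by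
    intro t ht k
    induction k with
    | zero => simp
    | succ k ih =>
      have e : t + (k + 1) * τb = (t + k * τb) + τb := by ring
      have h2 : pb ((t + k * τb) + τb) = pb (t + k * τb) + cb :=
        hperb _ (by omega)
      rw [e, h2, ih]; push_cast; ring
  -- speed comparison : τb * ca ≤ τa * cb
  have hτaQ : (0 : ℚ) < (τa : ℚ) := by exact_mod_cast hτa1
  have hτbQ : (0 : ℚ) < (τb : ℚ) := by exact_mod_cast hτb1
  have hs' : (|cb| : ℚ) * (τa : ℚ) ≤ (|ca| : ℚ) * (τb : ℚ) :=
    (div_le_div_iff₀ hτbQ hτaQ).mp hspeed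
  have hs : (τb : ℤ) * ca ≤ (τa : ℤ) * cb := by
    have hcaQ : ((ca : ℚ)) < 0 := by exact_mod_cast hca
    have hcbQ : ((cb : ℚ)) < 0 := by exact_mod_cast hcb
    rw [abs_of_neg hcaQ, abs_of_neg hcbQ] at hs'
    have h2 : (-cb) * (τa : ℤ) ≤ (-ca) * (τb : ℤ) := by exact_mod_cast hs'
    linarith
  set π : ℕ := max πa πb with hπ
  set T : ℕ := τa * τb with hT
  have hT1 : 1 ≤ T := Nat.one_le_iff_ne_zero.mpr (by positivity)
  -- one period of the gap
  have hper : ∀ t, π ≤ t → g t ≤ g (t + T) := by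
    intro t ht
    have e1 : t + T = t + τb * τa := by rw [hT]; ring
    have e2 : t + T = t + τa * τb := by rw [hT]
    have ha : pa (t + T) = pa t + (τb : ℤ) * ca := by
      rw [e1]; exact hka t (le_trans (le_max_left _ _) ht) τb
    have hb : pb (t + T) = pb t + (τa : ℤ) * cb := by
      rw [e2]; exact hkb t (le_trans (le_max_right _ _) ht) τa
    simp only [hg, ha, hb]
    linarith
  have hmono : ∀ k : ℕ, g π ≤ g (π + k * T) := by
    intro k
    induction k with
    | zero => simp
    | succ k ih =>
      have e : π + (k + 1) * T = (π + k * T) + T := by ring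
      rw [e]
      exact le_trans ih (hper _ (by omega))
  -- main bound
  intro n hne
  have hgn0 : g n = 0 := by simp [hg, hne]
  have hgn : 0 < g n := by
    rcases le_or_gt n π with hn | hn
    · have h0 := hlip 0 n
      simp only [Nat.zero_add] at h0
      have hg0 : g 0 = D := by simp [hg, hD]
      have hnH : (n : ℤ) ≤ 3 * H := by
        have : n ≤ 3 * H := le_trans hn (by omega)
        exact_mod_cast this
      have : (0:ℤ) ≤ 72 * H^2 := by positivity
      linarith [h0, hg0 ▸ h0]
    · set k := (n - π) / T with hk
      set r := (n - π) % T with hr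
      have hdecomp : n = π + k * T + r := by
        have h := Nat.div_add_mod' (n - π) T
        rw [← hk, ← hr] at h
        omega
      have hrT : r < T := Nat.mod_lt _ (by omega)
      have h1 := hmono k
      have h2 := hlip (π + k * T) r
      have hg0 : g 0 = D := by simp [hg, hD]
      have h3 := hlip 0 π
      simp only [Nat.zero_add] at h3
      have hπH : (π : ℤ) ≤ 3 * H := by
        have : π ≤ 3 * H := by omega
        exact_mod_cast this
      have hTH : (T : ℤ) ≤ 36 * H^2 := by
        have : T ≤ 36 * H * H := by
          calc T = τa * τb := hT
          _ ≤ (6*H) * (6*H) := Nat.mul_le_mul hτa hτb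
          _ = 36 * H * H := by ring
        calc (T:ℤ) ≤ ((36 * H * H : ℕ) : ℤ) := by exact_mod_cast this
        _ = 36 * H^2 := by push_cast; ring
      have hrZ : (r : ℤ) ≤ (T : ℤ) - 1 := by exact_mod_cast Nat.le_sub_one_of_lt hrT
      have hndecomp : g n = g (π + k * T + r) := by rw [← hdecomp]
      rw [hndecomp]
      linarith [hg0 ▸ h3]
  omega
end

section
/- Consider two agents a and b on the integer line as above, with b following a at initial distance D > 72H² + 6H, where both position sequences consist of a prefix of length at most 3H followed by periods of common length τ ≤ 36H² with constant per-period displacement. If the speed of b exceeds the speed of a by z > 0, then the positions of a and b cannot coincide in any round earlier than round 3H + 36H² + ⌈(D − 6H − 72H²)/z⌉. -/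
/-- if agent `b` follows agent `a` at initial distance
`D > 72H² + 6H`, both eventually periodic with common period `τ ≤ 36H²` after a
common prefix `π ≤ 3H`, and the speed of `b` exceeds that of `a` by `z > 0`,
then they cannot meet before round `3H + 36H² + ⌈(D − 6H − 72H²)/z⌉`. -/
theorem stmt_3 (H : ℕ) (pa pb : ℕ → ℤ)
    (hstepa : ∀ n, |pa (n + 1) - pa n| ≤ 1)
    (hstepb : ∀ n, |pb (n + 1) - pb n| ≤ 1)
    (π τ : ℕ) (da db : ℤ)
    (hπ : π ≤ 3 * H) (hτ1 : 1 ≤ τ) (hτ : τ ≤ 36 * H ^ 2)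
    (hpera : ∀ t, π ≤ t → pa (t + τ) = pa t - da)
    (hperb : ∀ t, π ≤ t → pb (t + τ) = pb t - db)
    (hda : 0 ≤ da) (hdadb : da < db)
    (D : ℤ) (hD : pb 0 - pa 0 = D)
    (hDbig : (72 * H ^ 2 + 6 * H : ℤ) < D)
    (z : ℚ) (hz : z = ((db : ℚ) - (da : ℚ)) / (τ : ℚ)) :
    ∀ n : ℕ, (n : ℤ) < 3 * H + 36 * H ^ 2 + ⌈((D : ℚ) - 6 * H - 72 * H ^ 2) / z⌉ →
      pa n ≠ pb n := by
  set g : ℕ → ℤ := fun n => pb n - pa n with hg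
  set e : ℤ := db - da with he
  have he1 : 1 ≤ e := by omega
  have hstep : ∀ n, g n - 2 ≤ g (n + 1) := by
    intro n
    have ha := abs_le.mp (hstepa n)
    have hb := abs_le.mp (hstepb n)
    simp only [hg]
    omega
  have hlip : ∀ m k : ℕ, g m - 2 * k ≤ g (m + k) := by
    intro m k
    induction k with
    | zero => simp
    | succ k ih =>
      have hs := hstep (m + k)
      have heq : m + (k + 1) = (m + k) + 1 := by omega
      rw [heq]
      push_cast
      push_cast at ih
      linarith
  have hper : ∀ t, π ≤ t → g (t + τ) = g t - e := by
    intro t ht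
    simp only [hg, he, hpera t ht, hperb t ht]
    ring
  have hiter : ∀ (k t : ℕ), π ≤ t → g (t + k * τ) = g t - k * e := by
    intro k
    induction k with
    | zero => intro t ht; simp
    | succ k ih =>
      intro t ht
      have h1 : t + (k + 1) * τ = (t + k * τ) + τ := by ring
      rw [h1, hper (t + k * τ) (by omega), ih t ht]
      push_cast
      ring
  have he2τ : e ≤ 2 * τ := by
    have h1 := hlip π τ
    have h2 := hper π le_rfl
    omega
  have hg0 : g 0 = D := hD
  intro n hn hmeet
  have hgn : g n = 0 := by simp [hg, hmeet]
  by_cases hcase : n < π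
  · -- prefix case
    have h1 := hlip 0 n
    rw [Nat.zero_add, hg0] at h1
    have h2 : (0:ℤ) < D - 2 * n := by
      have h3 : (n:ℤ) < 3 * H := by exact_mod_cast lt_of_lt_of_le hcase hπ
      nlinarith [sq_nonneg (H:ℤ)]
    omega
  · push_neg at hcase
    obtain ⟨k, r, hrτ, hnd⟩ : ∃ k r : ℕ, r < τ ∧ n = (π + r) + k * τ := by
      refine ⟨(n - π) / τ, (n - π) % τ, Nat.mod_lt _ (by omega), ?_⟩
      have h := Nat.div_add_mod (n - π) τ
      calc n = π + (n - π) := by omega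
        _ = π + (τ * ((n - π) / τ) + (n - π) % τ) := by rw [h]
        _ = (π + (n - π) % τ) + ((n - π) / τ) * τ := by ring
    have hkey : g n = g (π + r) - k * e := by
      rw [hnd]; exact hiter k (π + r) (by omega)
    have hlow : D - 2 * ((π : ℤ) + r) ≤ g (π + r) := by
      have h1 := hlip 0 (π + r)
      rw [Nat.zero_add, hg0] at h1
      push_cast at h1 ⊢
      linarith
    have hepos : (0:ℚ) < (e:ℚ) := by exact_mod_cast he1
    have hτpos : (0:ℚ) < (τ:ℚ) := by exact_mod_cast Nat.lt_of_lt_of_le Nat.zero_lt_one hτ1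
    set X : ℚ := (D : ℚ) - 6 * H - 72 * H ^ 2 with hX
    have hceil : (⌈X / z⌉ : ℚ) < X / z + 1 := Int.ceil_lt_add_one _
    have hXz : X / z = X * τ / e := by
      have heq : ((e : ℤ) : ℚ) = (db : ℚ) - da := by push_cast [he]; ring
      rw [hz, ← heq, div_div_eq_mul_div]
    have hn' : (n : ℤ) ≤ 3 * H + 36 * H ^ 2 + ⌈X / z⌉ - 1 := by omega
    have hnq : (n : ℚ) < 3 * H + 36 * H ^ 2 + X * τ / e := by
      have h1 : (n : ℚ) ≤ 3 * H + 36 * H ^ 2 + (⌈X / z⌉ : ℚ) - 1 := by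
        exact_mod_cast hn'
      linarith [hceil, hXz]
    have hne : (n : ℚ) * e < (3 * H + 36 * H ^ 2) * e + X * τ := by
      have h2 : ((n:ℚ) - (3 * H + 36 * H ^ 2)) < X * τ / e := by linarith
      have h3 := (lt_div_iff₀ hepos).mp h2
      nlinarith [h3]
    have hneZ : (n : ℤ) * e < (3 * H + 36 * H ^ 2) * e + (D - 6 * H - 72 * H ^ 2) * τ := by
      have hq : (((n : ℤ) * e : ℤ) : ℚ)
          < (((3 * H + 36 * H ^ 2) * e + (D - 6 * H - 72 * H ^ 2) * τ : ℤ) : ℚ) := by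
        rw [hX] at hne
        push_cast at hne ⊢
        linarith
      exact_mod_cast hq
    have hnZ : (n : ℤ) = (π : ℤ) + r + k * τ := by exact_mod_cast hnd
    have hA : (0:ℤ) ≤ 3 * H - π := by
      have : (π:ℤ) ≤ 3 * H := by exact_mod_cast hπ
      linarith
    have hB : (0:ℤ) ≤ 36 * H ^ 2 - r := by
      have h1 : (r:ℤ) < τ := by exact_mod_cast hrτ
      have h2 : (τ:ℤ) ≤ 36 * H ^ 2 := by exact_mod_cast hτ
      linarith
    rw [hnZ] at hneZ
    have step1 : (k:ℤ) * τ * e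
        < ((3 * H - π) + (36 * H ^ 2 - r)) * e + (D - 6 * H - 72 * H ^ 2) * τ := by
      linarith
    have step2 : ((3 * (H:ℤ) - π) + (36 * H ^ 2 - r)) * e
        ≤ ((3 * (H:ℤ) - π) + (36 * H ^ 2 - r)) * (2 * τ) :=
      mul_le_mul_of_nonneg_left he2τ (by linarith)
    have step3 : (τ:ℤ) * ((k:ℤ) * e) < (τ:ℤ) * (D - 2 * π - 2 * r) := by linarith
    have step4 : (k:ℤ) * e < D - 2 * π - 2 * r :=
      lt_of_mul_lt_mul_left step3 (by positivity)
    rw [hkey] at hgn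
    linarith
end

section
/- Let T be a finite set of agents on the oriented integer line, each with an eventually periodic position sequence classified as left-progressing, bounded, or right-progressing, where bounded agents visit at most M nodes on each side of their base, left-progressing agents visit at most M nodes right of their base, right-progressing agents visit at most M nodes left of their base, and M ≥ 36H² + 3H. Then one can choose distinct starting nodes for all agents (ordering left-progressing agents by non-increasing speed leftmost, then bounded agents, then right-progressing agents by non-decreasing speed, with consecutive starting nodes at distance 2M + 1) such that no two agents are ever at the same node in the same round. -/
private lemma lip2 (f : ℕ → ℤ) (hstep : ∀ n, |f (n + 1) - f n| ≤ 1) :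
    ∀ m k, |f (m + k) - f m| ≤ k := by
  intro m k
  induction k with
  | zero => simp
  | succ k ih =>
    have h1 := hstep (m + k)
    have : f (m + (k+1)) - f m = (f (m + k + 1) - f (m + k)) + (f (m + k) - f m) := by
      rw [show m + (k+1) = m + k + 1 by ring]; ring
    rw [this]
    calc |(f (m + k + 1) - f (m + k)) + (f (m + k) - f m)|
        ≤ |f (m + k + 1) - f (m + k)| + |f (m + k) - f m| := abs_add_le _ _
      _ ≤ 1 + k := add_le_add h1 ih
      _ = ((k:ℤ) + 1) := by ring
      _ = ((k+1 : ℕ) : ℤ) := by push_cast; ring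

private lemma drift (H : ℕ) (f : ℕ → ℤ) (hf0 : f 0 = 0)
    (hstep : ∀ n, |f (n + 1) - f n| ≤ 1)
    (π τ : ℕ) (c : ℤ) (hπ : π ≤ 3 * H) (hτ1 : 1 ≤ τ) (hτ : τ ≤ 6 * H)
    (hper : ∀ t, π ≤ t → f (t + τ) = f t + c) :
    ∀ n, |(f n : ℚ) - n * ((c : ℚ) / τ)| ≤ 18 * H := by
  have hτQ : (0:ℚ) < τ := by exact_mod_cast hτ1
  have hfb : ∀ n, |f n| ≤ (n : ℤ) := by
    intro n
    have := lip2 f hstep 0 n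
    simpa [hf0] using this
  have hc : |c| ≤ (τ : ℤ) := by
    have h := hper π le_rfl
    have := lip2 f hstep π τ
    rw [h] at this
    simpa using this
  have hvc : |(c : ℚ) / τ| ≤ 1 := by
    rw [abs_div, abs_of_pos hτQ, div_le_one hτQ]
    exact_mod_cast hc
  intro n
  induction n using Nat.strong_induction_on with
  | _ n ih =>
    by_cases h : n < π + τ
    · have hn : n + 1 ≤ 9 * H := by omega
      calc |(f n : ℚ) - n * ((c : ℚ) / τ)|
          ≤ |(f n : ℚ)| + |(n : ℚ) * ((c : ℚ) / τ)| := abs_sub _ _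
        _ ≤ n + n * 1 := by
            refine add_le_add ?_ ?_
            · have := hfb n
              rw [← Int.cast_abs]
              exact_mod_cast this
            · rw [abs_mul, abs_of_nonneg (by positivity : (0:ℚ) ≤ (n:ℚ))]
              exact mul_le_mul_of_nonneg_left hvc (by positivity)
        _ = 2 * n := by ring
        _ ≤ 18 * H := by
            have : 2 * (n:ℚ) ≤ 2 * (9 * H - 1) := by
              have : (n:ℚ) ≤ 9 * H - 1 := by
                have : ((n:ℚ)) + 1 ≤ 9 * H := by exact_mod_cast hn
                linarith
              linarith
            linarith
    · -- n ≥ π + τ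
      push_neg at h
      set m := n - τ with hm
      have hmn : m + τ = n := by omega
      have hmπ : π ≤ m := by omega
      have hmlt : m < n := by omega
      have hf : f n = f m + c := by
        rw [← hmn]; exact hper m hmπ
      have key : (f n : ℚ) - n * ((c : ℚ) / τ) = (f m : ℚ) - m * ((c : ℚ) / τ) := by
        rw [hf, ← hmn]
        push_cast
        field_simp
        ring
      rw [key]
      exact ih m hmlt

/-- for a finite set of agents on the oriented line, each with an
eventually periodic displacement sequence (left-progressing, bounded, or
right-progressing, with excursions bounded by `M ≥ 36H² + 3H`), one can choose
distinct starting nodes so that no two agents are ever at the same node. -/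
theorem stmt_4 (H M : ℕ) (hM : 36 * H ^ 2 + 3 * H ≤ M)
    (ι : Type) [Fintype ι]
    (f : ι → ℕ → ℤ) (hf0 : ∀ i, f i 0 = 0)
    (hstep : ∀ i n, |f i (n + 1) - f i n| ≤ 1)
    (π τ : ι → ℕ) (c : ι → ℤ)
    (hπ : ∀ i, π i ≤ 3 * H) (hτ1 : ∀ i, 1 ≤ τ i) (hτ : ∀ i, τ i ≤ 6 * H)
    (hper : ∀ i t, π i ≤ t → f i (t + τ i) = f i t + c i)
    (hleft : ∀ i, c i < 0 → ∀ n, f i n ≤ (M : ℤ))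
    (hbdd : ∀ i, c i = 0 → ∀ n, |f i n| ≤ (M : ℤ))
    (hright : ∀ i, 0 < c i → ∀ n, -(M : ℤ) ≤ f i n) :
    ∃ base : ι → ℤ, Function.Injective base ∧
      ∀ i j, i ≠ j → ∀ n, base i + f i n ≠ base j + f j n := by
  classical
  -- average speed of each agent
  set v : ι → ℚ := fun i => (c i : ℚ) / (τ i) with hv
  have hdrift : ∀ i n, |(f i n : ℚ) - n * v i| ≤ 18 * H :=
    fun i => drift H (f i) (hf0 i) (hstep i) (π i) (τ i) (c i)
      (hπ i) (hτ1 i) (hτ i) (hper i)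
  -- sort agents by speed
  set N := Fintype.card ι with hN
  set E : ι ≃ Fin N := Fintype.equivFin ι with hE
  set σ : Equiv.Perm (Fin N) := Tuple.sort (fun a => v (E.symm a)) with hσ
  have hmono : Monotone ((fun a => v (E.symm a)) ∘ σ) :=
    Tuple.monotone_sort _
  set rank : ι → Fin N := fun i => σ⁻¹ (E i) with hrank
  have hrinj : Function.Injective rank := by
    intro a b hab
    apply E.injective
    apply σ⁻¹.injective
    exact hab
  have hrv : ∀ i j, rank i ≤ rank j → v i ≤ v j := by
    intro i j hij
    have := hmono hij
    simpa [hrank, Function.comp] using this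
  set D : ℤ := 36 * H + 1 with hD
  refine ⟨fun i => D * ((rank i : ℕ) : ℤ), ?_, ?_⟩
  · intro a b hab
    apply hrinj
    have hD0 : D ≠ 0 := by positivity
    have : ((rank a : ℕ) : ℤ) = ((rank b : ℕ) : ℤ) :=
      mul_left_cancel₀ hD0 hab
    exact Fin.ext (by exact_mod_cast this)
  · -- no meetings
    have key : ∀ i j, rank i < rank j → ∀ n,
        D * ((rank i : ℕ) : ℤ) + f i n ≠ D * ((rank j : ℕ) : ℤ) + f j n := by
      intro i j hij n heq
      have hvij : v i ≤ v j := hrv i j hij.le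
      have hgap : D ≤ D * ((rank j : ℕ) : ℤ) - D * ((rank i : ℕ) : ℤ) := by
        have h1 : ((rank i : ℕ) : ℤ) + 1 ≤ ((rank j : ℕ) : ℤ) := by
          exact_mod_cast (Nat.succ_le_of_lt hij)
        nlinarith [show (0:ℤ) < D by positivity]
      -- f i n - f j n = base j - base i ≥ D
      have hdiff : D ≤ f i n - f j n := by linarith [heq.ge, heq.le]; 
      have h1 := hdrift i n
      have h2 := hdrift j n
      have hA : (f i n : ℚ) ≤ n * v i + 18 * H := by
        have := abs_le.mp h1
        linarith [this.2]
      have hB : (n : ℚ) * v j - 18 * H ≤ (f j n : ℚ) := by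
        have := abs_le.mp h2
        linarith [this.1]
      have hn : (0:ℚ) ≤ (n:ℚ) := by positivity
      have hvd : (n:ℚ) * v i ≤ (n:ℚ) * v j := mul_le_mul_of_nonneg_left hvij hn
      have hQ : (f i n : ℚ) - (f j n : ℚ) ≤ 36 * H := by linarith
      have hDQ : (D : ℚ) ≤ (f i n : ℚ) - (f j n : ℚ) := by
        have : ((f i n - f j n : ℤ) : ℚ) = (f i n : ℚ) - (f j n : ℚ) := by push_cast; ring
        rw [← this]
        exact_mod_cast hdiff
      rw [hD] at hDQ
      push_cast at hDQ
      linarith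
    intro i j hij n
    rcases lt_trichotomy (rank i) (rank j) with h | h | h
    · exact key i j h n
    · exact absurd (hrinj h) hij
    · intro heq
      exact key j i h n heq.symm
end

section
/- Let z ≥ 8 and let α, β : ℕ → {0,1} be two sequences arising from binary strings of length z, each starting with bit 1, with the strings distinct. Consider two agents e and f on the integer line, both started in round 0, whose dancing sources approach each other by 2 every z rounds, starting at distance d ≥ 1, and which move according to the bits of their respective strings within each phase. Then e and f occupy the same node in some round strictly before round ⌈d/2⌉·z; moreover their meeting occurs in the phase when their dancing sources are at distance 1 (if d is odd) or 2 (if d is even). -/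
/-- Number of 1-bits among the first `m` bits of the string `s`. -/
def onesCount (s : ℕ → Bool) (m : ℕ) : ℕ :=
  ((Finset.range m).filter (fun j => s j = true)).card

/-- Position, in round `n`, of an agent performing `Dance` with string `s` of
length `z`, based at `base`, whose progress direction is to the right: its
dancing source in phase `n / z` is `base + n / z`, and it stands on the far
endpoint of its dancing edge iff the number of 1s processed so far in the
current phase is odd. -/
def dancePosR (base : ℤ) (s : ℕ → Bool) (z n : ℕ) : ℤ :=
  base + ((n / z : ℕ) : ℤ) + (if onesCount s (n % z) % 2 = 1 then 1 else 0)

/-- Same, for an agent whose progress direction is to the left. -/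
def dancePosL (base : ℤ) (s : ℕ → Bool) (z n : ℕ) : ℤ :=
  base - ((n / z : ℕ) : ℤ) - (if onesCount s (n % z) % 2 = 1 then 1 else 0)

/-!
Let `p` be the phase in which the dancing sources are at distance 1 (`d` odd) or 2 (`d` even).
In round `z * p + m` of that phase the agents stand at `e0 + p + [a]` and `e0 + d - p - [b]`,
where `[a]`, `[b]` record whether an odd number of 1s has been read so far. For even `d` they
meet at `m = 1`, after each has read the leading 1. For odd `d` they meet just after the first
position where the strings differ: there the parities of the 1-counts differ, and this position
is not the last one since both strings contain an odd number of 1s.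
-/

lemma onesCount_zero (s : ℕ → Bool) : onesCount s 0 = 0 := rfl

lemma onesCount_succ (s : ℕ → Bool) (m : ℕ) :
    onesCount s (m + 1) = onesCount s m + if s m then 1 else 0 := by
  simp only [onesCount, Finset.card_filter, Finset.sum_range_succ]

lemma onesCount_one {s : ℕ → Bool} (h : s 0 = true) : onesCount s 1 = 1 := by
  simp [onesCount_succ, onesCount_zero, h]

lemma onesCount_congr {A B : ℕ → Bool} {m : ℕ} (h : ∀ j < m, A j = B j) :
    onesCount A m = onesCount B m := by
  unfold onesCount
  congr 1
  exact Finset.filter_congr fun j hj => by rw [h j (Finset.mem_range.mp hj)]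

lemma exists_lt_onesCount_mod_two_ne {A B : ℕ → Bool} {z : ℕ} (hne : ∃ i < z, A i ≠ B i)
    (hz : onesCount A z % 2 = onesCount B z % 2) :
    ∃ m < z, onesCount A m % 2 ≠ onesCount B m % 2 := by
  obtain ⟨i, ⟨hiz, hAB⟩, hmin⟩ : ∃ i, (i < z ∧ A i ≠ B i) ∧ ∀ j < i, A j = B j :=
    ⟨Nat.find hne, Nat.find_spec hne, fun j hj =>
      not_not.1 <| not_and.1 (Nat.find_min hne hj) (hj.trans (Nat.find_spec hne).1)⟩
  have hsucc : onesCount A (i + 1) % 2 ≠ onesCount B (i + 1) % 2 := by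
    rw [onesCount_succ, onesCount_succ, onesCount_congr hmin]
    cases hA : A i <;> cases hB : B i <;> simp_all <;> omega
  exact ⟨i + 1, lt_of_le_of_ne hiz fun h => hsucc (h ▸ hz), hsucc⟩

section Phase

variable {base : ℤ} {s : ℕ → Bool} {z m : ℕ}

lemma dancePosR_mul_add (k : ℕ) (hm : m < z) :
    dancePosR base s z (z * k + m) = base + k + if onesCount s m % 2 = 1 then 1 else 0 := by
  rw [dancePosR, Nat.mul_add_div (by omega), Nat.div_eq_of_lt hm, Nat.mul_add_mod,
    Nat.mod_eq_of_lt hm, add_zero]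

lemma dancePosL_mul_add (k : ℕ) (hm : m < z) :
    dancePosL base s z (z * k + m) = base - k - if onesCount s m % 2 = 1 then 1 else 0 := by
  rw [dancePosL, Nat.mul_add_div (by omega), Nat.div_eq_of_lt hm, Nat.mul_add_mod,
    Nat.mod_eq_of_lt hm, add_zero]

end Phase

/-- two agents dancing towards each other with distinct binary
strings of length `z`, each starting with bit 1 and containing an odd number of
1s, starting simultaneously at distance `d ≥ 1`, meet strictly before round
`⌈d/2⌉·z`, and the meeting occurs in the phase in which their dancing sources
are at distance 1 (`d` odd) or 2 (`d` even). -/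
theorem stmt_7 (z d : ℕ) (hz : 8 ≤ z) (hd : 1 ≤ d)
    (A B : ℕ → Bool) (hA0 : A 0 = true) (hB0 : B 0 = true)
    (hAodd : onesCount A z % 2 = 1) (hBodd : onesCount B z % 2 = 1)
    (hne : ∃ i < z, A i ≠ B i)
    (e0 f0 : ℤ) (hdist : f0 = e0 + (d : ℤ)) :
    ∃ n, n < ((d + 1) / 2) * z ∧ dancePosR e0 A z n = dancePosL f0 B z n ∧
      n / z = (if d % 2 = 0 then d / 2 - 1 else d / 2) := by
  set p := if d % 2 = 0 then d / 2 - 1 else d / 2 with hp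
  suffices ∃ m < z, dancePosR e0 A z (z * p + m) = dancePosL f0 B z (z * p + m) by
    obtain ⟨m, hmz, hmeet⟩ := this
    refine ⟨z * p + m, ?_, hmeet, ?_⟩
    · have hphases : (d + 1) / 2 = p + 1 := by split_ifs at hp <;> omega
      rw [hphases]
      nlinarith
    · rw [Nat.mul_add_div (by omega), Nat.div_eq_of_lt hmz, add_zero]
  obtain ⟨k, rfl | rfl⟩ := Nat.even_or_odd' d
  · have hpk : p = k - 1 := by simp [hp]
    refine ⟨1, by omega, ?_⟩
    rw [dancePosR_mul_add _ (by omega), dancePosL_mul_add _ (by omega), onesCount_one hA0,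
      onesCount_one hB0, hdist, hpk]
    push_cast [Nat.cast_sub (show 1 ≤ k by omega)]
    ring
  · have hpk : p = k := by simp [hp]; omega
    obtain ⟨m, hmz, hpar⟩ := exists_lt_onesCount_mod_two_ne hne (hAodd.trans hBodd.symm)
    refine ⟨m, hmz, ?_⟩
    rw [dancePosR_mul_add _ hmz, dancePosL_mul_add _ hmz, hdist, hpk]
    push_cast
    split_ifs <;> omega
end

section
/- Let e be a slow agent executing Dance with a string of length z = 2·len + 4 (len ≥ 2) whose dancing source moves one step left every z rounds, and let f be a fast agent executing Dance with the string 1110 whose dancing source moves one step left every 4 rounds. If in round t agent f is to the right of agent e at distance d ≥ 1 and both progress left, then there is a round τ ≤ t + 48d + 4 in which the dancing source of f is at least 2 steps left of the dancing source of e, hence f is left of e. -/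
/-- a fast agent `f` (dancing source moving one step left every 4
rounds) that in round `t` is right of a slow agent `e` (dancing source moving
one step left every `z = 2·len + 4 ≥ 8` rounds) at distance `d ≥ 1`, both
progressing left, has by some round `τ ≤ t + 48d + 4` its dancing source at
least 2 steps left of `e`'s, hence `f` is then left of `e`. -/
theorem stmt_8 (len z t d : ℕ) (hlen : 2 ≤ len) (hz : z = 2 * len + 4)
    (hd : 1 ≤ d)
    (Se Sf pe pf : ℕ → ℤ)
    (hSe : ∀ n, Se t - (((n / z : ℕ) : ℤ) + 1) ≤ Se (t + n))
    (hSf : ∀ n, Sf (t + n) ≤ Sf t - ((n / 4 : ℕ) : ℤ) + 1)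
    (hgap : Sf t ≤ Se t + (d : ℤ) + 1)
    (hpe : ∀ n, Se n - 1 ≤ pe n ∧ pe n ≤ Se n)
    (hpf : ∀ n, Sf n - 1 ≤ pf n ∧ pf n ≤ Sf n)
    (hpos : pf t = pe t + (d : ℤ)) :
    ∃ τ, τ ≤ t + 48 * d + 4 ∧ Sf τ + 2 ≤ Se τ ∧ pf τ < pe τ := by
  refine ⟨t + (48 * d + 4), le_refl _, ?_⟩
  have h1 := hSe (48 * d + 4)
  have h2 := hSf (48 * d + 4)
  have hdiv : (48 * d + 4) / z ≤ (48 * d + 4) / 8 :=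
    Nat.div_le_div_left (by omega) (by norm_num)
  have hdiv8 : (48 * d + 4) / 8 = 6 * d := by omega
  have hdiv4 : (48 * d + 4) / 4 = 12 * d + 1 := by omega
  have hS : Sf (t + (48 * d + 4)) + 2 ≤ Se (t + (48 * d + 4)) := by
    have : ((48 * d + 4) / z : ℤ) ≤ 6 * d := by exact_mod_cast hdiv8 ▸ hdiv
    rw [hdiv4] at h2
    push_cast at h1 h2 ⊢
    linarith
  have he := hpe (t + (48 * d + 4))
  have hf := hpf (t + (48 * d + 4))
  exact ⟨hS, by linarith⟩
end

section
/- Let a be an agent that from round t_m onwards swings at speed one between two agents b and b' that move apart from a common origin at speed one half (distance between b and b' in round s equals s or s+1 according to parity). If t_m is odd, then a captures b by round 3·t_m + 1; consequently, if t_m ≤ 2D, the first capture occurs by round 6D + 1. -/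
/-- agents `b` and `b'` move apart from the origin at speed one
half (moving in odd rounds), `b` in direction `εb`. Agent `a` is between them
in an odd round `t_m` and moves one step per round towards `b` as long as it
has not met `b`. Then `a` captures `b` by round `3·t_m + 1`; consequently, if
`t_m ≤ 2D`, the capture occurs by round `6D + 1`. -/
theorem stmt_17 (tm D : ℕ) (hodd : Odd tm) (εb : ℤ) (hε : εb = 1 ∨ εb = -1)
    (pb pa : ℕ → ℤ)
    (hpb : ∀ n, pb n = εb * (((n + 1) / 2 : ℕ) : ℤ))
    (hbetween : |pa tm| ≤ (((tm + 1) / 2 : ℕ) : ℤ))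
    (hchase : ∀ n, tm ≤ n → (∀ m, tm ≤ m → m ≤ n → pa m ≠ pb m) →
      pa (n + 1) = pa n + εb) :
    ∃ n, tm ≤ n ∧ n ≤ 3 * tm + 1 ∧ pa n = pb n ∧
      (tm ≤ 2 * D → n ≤ 6 * D + 1) := by
  obtain ⟨k, hk⟩ := hodd
  have key : ∃ n, tm ≤ n ∧ n ≤ 3 * tm + 1 ∧ pa n = pb n := by
    by_contra hcon
    push_neg at hcon
    have hε2 : εb * εb = 1 := by rcases hε with h | h <;> simp [h]
    have hεne : εb ≠ 0 := by rcases hε with h | h <;> simp [h]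
    set g : ℕ → ℤ := fun n => εb * (pb n - pa n) with hg
    have hne : ∀ n, tm ≤ n → n ≤ 3 * tm + 1 → g n ≠ 0 := by
      intro n h1 h2 h0
      rcases mul_eq_zero.mp h0 with h | h
      · exact hεne h
      · exact hcon n h1 h2 (by linarith)
    have hstep : ∀ n, tm ≤ n → n ≤ 3 * tm →
        g (n + 1) = g n + ((((n + 2) / 2 : ℕ) : ℤ) - (((n + 1) / 2 : ℕ) : ℤ)) - 1 := by
      intro n h1 h2
      have hpa : pa (n + 1) = pa n + εb := by
        refine hchase n h1 ?_
        intro m hm1 hm2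
        exact hcon m hm1 (by omega)
      have e1 := hpb n
      have e2 := hpb (n + 1)
      simp only [hg]
      rw [hpa, e1, e2]
      have : (n + 1 + 1) = n + 2 := by ring
      rw [this]
      nlinarith [hε2]
    have main : ∀ j, j ≤ 2 * tm + 1 →
        1 ≤ g (tm + j) ∧ g (tm + j) ≤ ((tm : ℤ) + 1) - (((j + 1) / 2 : ℕ) : ℤ) := by
      intro j
      induction j with
      | zero =>
        intro _
        simp only [Nat.add_zero]
        have e1 := hpb tm
        have habs := abs_le.mp hbetween
        have hC : (2 * ((tm + 1) / 2) : ℕ) = tm + 1 := by omega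
        have hCz : ((( tm + 1) / 2 : ℕ) : ℤ) * 2 = (tm : ℤ) + 1 := by
          exact_mod_cast by omega
        have hpab : εb * pa tm ≤ (((tm + 1) / 2 : ℕ) : ℤ) ∧
            -((((tm + 1) / 2 : ℕ) : ℤ)) ≤ εb * pa tm := by
          rcases hε with h | h <;> constructor <;> simp [h] <;> linarith [habs.1, habs.2]
        have hgval : g tm = (((tm + 1) / 2 : ℕ) : ℤ) - εb * pa tm := by
          simp only [hg]
          rw [e1]; nlinarith [hε2]
        have h0 : 0 ≤ g tm := by rw [hgval]; linarith [hpab.1]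
        have hub : g tm ≤ (tm : ℤ) + 1 := by rw [hgval]; linarith [hpab.2]
        have hne0 : g tm ≠ 0 := hne tm le_rfl (by omega)
        constructor
        · omega
        · simpa using hub
      | succ j ih =>
        intro hj
        obtain ⟨ih1, ih2⟩ := ih (by omega)
        have hn2 : tm + j ≤ 3 * tm := by omega
        have hs := hstep (tm + j) (by omega) hn2
        have hrw : tm + (j + 1) = (tm + j) + 1 := by ring
        rw [hrw]
        set A := ((tm + j + 1) / 2 : ℕ) with hA
        set B := ((tm + j + 2) / 2 : ℕ) with hB
        set P := ((j + 1) / 2 : ℕ) with hP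
        set Q := ((j + 1 + 1) / 2 : ℕ) with hQ
        have hnat : B + Q = A + P + 1 ∧ A ≤ B := by
          constructor <;> omega
        have hcast : (B : ℤ) + (Q : ℤ) = (A : ℤ) + (P : ℤ) + 1 := by exact_mod_cast hnat.1
        have hcast2 : (A : ℤ) ≤ (B : ℤ) := by exact_mod_cast hnat.2
        have hge0 : 0 ≤ g (tm + j + 1) := by rw [hs]; linarith
        have hne0 : g (tm + j + 1) ≠ 0 := hne (tm + j + 1) (by omega) (by omega)
        refine ⟨by omega, ?_⟩
        rw [hs]
        linarith
    obtain ⟨h1, h2⟩ := main (2 * tm + 1) le_rfl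
    have : ((2 * tm + 1 + 1) / 2 : ℕ) = tm + 1 := by omega
    rw [this] at h2
    push_cast at h2
    linarith
  obtain ⟨n, h1, h2, h3⟩ := key
  exact ⟨n, h1, h2, h3, fun hD => by omega⟩
end
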